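/- arXiv:2204.10275 — 9 statements merged into one kernel-verified Lean document; each statement's English description precedes it below -/
import Mathlib

section
/- Suppose the map h ↦ Fdr(h) is strictly decreasing on [0,∞), that h* ≥ 0 satisfies Fdr(h*) = α and h* is the least h ≥ 0 with Fdr(h) ≤ α, and that h₀ ≥ 0 satisfies 𝒫(|t| > h₀ | F) = α, for a fixed significance level α ∈ (0,1). Then h* > h₀ if and only if π_F > 𝒫(|t| > h₀). (Proposition 1, first case: the FDR-controlling hurdle strictly exceeds the classical hurdle exactly when the share of false factors exceeds the share of significant t-statistics.) -/
open MeasureTheory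

/-- Proposition 1, first case: the FDR-controlling hurdle strictly exceeds the
classical hurdle exactly when the share of false factors exceeds the share of
significant t-statistics. -/
theorem fdr_hurdle_gt_iff
    {Ω : Type*} [MeasurableSpace Ω] (P : Measure Ω) [IsProbabilityMeasure P]
    (F : Set Ω) (hFmeas : MeasurableSet F)
    (hπF : (P F).toReal ∈ Set.Ioo (0 : ℝ) 1)
    (t : Ω → ℝ) (ht : Measurable t)
    (hpos : ∀ h : ℝ, 0 ≤ h → 0 < (P {ω | h < |t ω|}).toReal)
    (Fdr : ℝ → ℝ)
    (hFdrDef : ∀ h : ℝ,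
      Fdr h = (P (F ∩ {ω | h < |t ω|})).toReal / (P {ω | h < |t ω|}).toReal)
    (hdec : StrictAntiOn Fdr (Set.Ici (0 : ℝ)))
    (α : ℝ) (hα : α ∈ Set.Ioo (0 : ℝ) 1)
    (hstar : ℝ) (hstar_nonneg : 0 ≤ hstar)
    (hstar_eq : Fdr hstar = α)
    (hstar_least : ∀ h : ℝ, 0 ≤ h → Fdr h ≤ α → hstar ≤ h)
    (h₀ : ℝ) (h₀_nonneg : 0 ≤ h₀)
    (hclassical : (P (F ∩ {ω | h₀ < |t ω|})).toReal / (P F).toReal = α) :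
    hstar > h₀ ↔ (P F).toReal > (P {ω | h₀ < |t ω|}).toReal := by
  set πF := (P F).toReal with hπdef
  set PA := (P {ω | h₀ < |t ω|}).toReal with hPAdef
  have hπ0 : 0 < πF := hπF.1
  have hPA0 : 0 < PA := hpos h₀ h₀_nonneg
  have hα0 : 0 < α := hα.1
  have hnum : (P (F ∩ {ω | h₀ < |t ω|})).toReal = α * πF := by
    field_simp at hclassical
    linarith [hclassical]
  have hFdr0 : Fdr h₀ = α * πF / PA := by rw [hFdrDef, hnum]
  have key : Fdr h₀ > α ↔ πF > PA := by
    rw [hFdr0, gt_iff_lt, lt_div_iff₀ hPA0]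
    constructor
    · intro h; nlinarith
    · intro h; nlinarith
  rw [← key]
  constructor
  · intro h
    have := hdec (Set.mem_Ici.2 h₀_nonneg) (Set.mem_Ici.2 hstar_nonneg) h
    rw [hstar_eq] at this
    exact this
  · intro h
    by_contra hle
    push_neg at hle
    rcases lt_or_eq_of_le hle with hlt | heq
    · have := hdec (Set.mem_Ici.2 hstar_nonneg) (Set.mem_Ici.2 h₀_nonneg) hlt
      rw [hstar_eq] at this
      linarith
    · rw [heq] at hstar_eq
      linarith
end

section
/- Suppose the map h ↦ Fdr(h) is strictly decreasing on [0,∞), that h* ≥ 0 satisfies Fdr(h*) = α and h* is the least h ≥ 0 with Fdr(h) ≤ α, and that h₀ ≥ 0 satisfies 𝒫(|t| > h₀ | F) = α, for a fixed significance level α ∈ (0,1). Then h* = h₀ if and only if π_F = 𝒫(|t| > h₀). (Proposition 1, second case: the FDR-controlling hurdle equals the classical hurdle exactly when the share of false factors equals the share of significant t-statistics.) -/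
open MeasureTheory

/-- Proposition 1, second case: the FDR-controlling hurdle equals the
classical hurdle exactly when the share of false factors equals the share of
significant t-statistics. -/
theorem fdr_hurdle_eq_iff
    {Ω : Type*} [MeasurableSpace Ω] (P : Measure Ω) [IsProbabilityMeasure P]
    (F : Set Ω) (hFmeas : MeasurableSet F)
    (hπF : (P F).toReal ∈ Set.Ioo (0 : ℝ) 1)
    (t : Ω → ℝ) (ht : Measurable t)
    (hpos : ∀ h : ℝ, 0 ≤ h → 0 < (P {ω | h < |t ω|}).toReal)
    (Fdr : ℝ → ℝ)
    (hFdrDef : ∀ h : ℝ,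
      Fdr h = (P (F ∩ {ω | h < |t ω|})).toReal / (P {ω | h < |t ω|}).toReal)
    (hdec : StrictAntiOn Fdr (Set.Ici (0 : ℝ)))
    (α : ℝ) (hα : α ∈ Set.Ioo (0 : ℝ) 1)
    (hstar : ℝ) (hstar_nonneg : 0 ≤ hstar)
    (hstar_eq : Fdr hstar = α)
    (hstar_least : ∀ h : ℝ, 0 ≤ h → Fdr h ≤ α → hstar ≤ h)
    (h₀ : ℝ) (h₀_nonneg : 0 ≤ h₀)
    (hclassical : (P (F ∩ {ω | h₀ < |t ω|})).toReal / (P F).toReal = α) :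
    hstar = h₀ ↔ (P F).toReal = (P {ω | h₀ < |t ω|}).toReal := by
  have hFpos : 0 < (P F).toReal := hπF.1
  have hApos : 0 < (P {ω | h₀ < |t ω|}).toReal := hpos h₀ h₀_nonneg
  have hnum : (P (F ∩ {ω | h₀ < |t ω|})).toReal = α * (P F).toReal := by
    field_simp at hclassical
    linarith [hclassical]
  have hnumpos : 0 < (P (F ∩ {ω | h₀ < |t ω|})).toReal := by
    rw [hnum]; exact mul_pos hα.1 hFpos
  constructor
  · intro heq
    have : Fdr h₀ = α := heq ▸ hstar_eq
    rw [hFdrDef h₀] at this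
    have : (P (F ∩ {ω | h₀ < |t ω|})).toReal = α * (P {ω | h₀ < |t ω|}).toReal := by
      field_simp at this; linarith
    have h2 := hnum.symm.trans this
    exact (mul_left_cancel₀ (ne_of_gt hα.1) h2)
  · intro heq
    have hF0 : Fdr h₀ = α := by
      rw [hFdrDef h₀, ← heq, hnum, mul_div_assoc, div_self (ne_of_gt hFpos), mul_one]
    exact hdec.injOn hstar_nonneg h₀_nonneg (by rw [hstar_eq, hF0])
end

section
/- Suppose the map h ↦ Fdr(h) is strictly decreasing on [0,∞), that h* ≥ 0 satisfies Fdr(h*) = α and h* is the least h ≥ 0 with Fdr(h) ≤ α, and that h₀ ≥ 0 satisfies 𝒫(|t| > h₀ | F) = α, for a fixed significance level α ∈ (0,1). Then h* < h₀ if and only if π_F < 𝒫(|t| > h₀). (Proposition 1, third case: the FDR-controlling hurdle can be strictly lowered below the classical hurdle exactly when the share of false factors is below the share of significant t-statistics.) -/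
open MeasureTheory

/-- Proposition 1, third case: the FDR-controlling hurdle is strictly below the
classical hurdle exactly when the share of false factors is below the share of
significant t-statistics. -/
theorem fdr_hurdle_lt_iff
    {Ω : Type*} [MeasurableSpace Ω] (P : Measure Ω) [IsProbabilityMeasure P]
    (F : Set Ω) (hFmeas : MeasurableSet F)
    (hπF : (P F).toReal ∈ Set.Ioo (0 : ℝ) 1)
    (t : Ω → ℝ) (ht : Measurable t)
    (hpos : ∀ h : ℝ, 0 ≤ h → 0 < (P {ω | h < |t ω|}).toReal)
    (Fdr : ℝ → ℝ)
    (hFdrDef : ∀ h : ℝ,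
      Fdr h = (P (F ∩ {ω | h < |t ω|})).toReal / (P {ω | h < |t ω|}).toReal)
    (hdec : StrictAntiOn Fdr (Set.Ici (0 : ℝ)))
    (α : ℝ) (hα : α ∈ Set.Ioo (0 : ℝ) 1)
    (hstar : ℝ) (hstar_nonneg : 0 ≤ hstar)
    (hstar_eq : Fdr hstar = α)
    (hstar_least : ∀ h : ℝ, 0 ≤ h → Fdr h ≤ α → hstar ≤ h)
    (h₀ : ℝ) (h₀_nonneg : 0 ≤ h₀)
    (hclassical : (P (F ∩ {ω | h₀ < |t ω|})).toReal / (P F).toReal = α) :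
    hstar < h₀ ↔ (P F).toReal < (P {ω | h₀ < |t ω|}).toReal := by
  have hPF := hπF.1
  have hPA := hpos h₀ h₀_nonneg
  have hnum : (P (F ∩ {ω | h₀ < |t ω|})).toReal = α * (P F).toReal := by
    field_simp at hclassical
    linarith [hclassical]
  have hFdr0 : Fdr h₀ = α * (P F).toReal / (P {ω | h₀ < |t ω|}).toReal := by
    rw [hFdrDef, hnum]
  have key : Fdr h₀ < α ↔ (P F).toReal < (P {ω | h₀ < |t ω|}).toReal := by
    rw [hFdr0, div_lt_iff₀ hPA]
    constructor
    · intro h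
      nlinarith [hα.1]
    · intro h
      nlinarith [hα.1]
  constructor
  · intro hlt
    rw [← key, ← hstar_eq]
    exact hdec (Set.mem_Ici.mpr hstar_nonneg) (Set.mem_Ici.mpr h₀_nonneg) hlt
  · intro h
    have hle : hstar ≤ h₀ := hstar_least h₀ h₀_nonneg (le_of_lt (by rw [hstar_eq] at *; exact key.mpr h))
    rcases lt_or_eq_of_le hle with h' | h'
    · exact h'
    · exfalso
      have := key.mpr h
      rw [← h', hstar_eq] at this
      exact lt_irrefl _ this
end

section
/- Let α, α₀ ∈ (0,1). Suppose the map h ↦ Fdr(h) is strictly decreasing on [0,∞), that h* ≥ 0 satisfies Fdr(h*) = α and h* is the least h ≥ 0 with Fdr(h) ≤ α, and that h₀ ≥ 0 satisfies 𝒫(|t| > h₀ | F) = α₀. Then h* > h₀ if and only if π_F > (α/α₀)·𝒫(|t| > h₀). (Generalized Proposition 1, allowing the FDR level α and the classical significance level α₀ to differ.) -/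
open MeasureTheory

/-- Generalized Proposition 1, allowing the FDR level α and the classical
significance level α₀ to differ: the FDR-controlling hurdle strictly exceeds
the classical hurdle iff π_F > (α/α₀)·𝒫(|t| > h₀). -/
theorem fdr_hurdle_gt_iff_general
    {Ω : Type*} [MeasurableSpace Ω] (P : Measure Ω) [IsProbabilityMeasure P]
    (F : Set Ω) (hFmeas : MeasurableSet F)
    (hπF : (P F).toReal ∈ Set.Ioo (0 : ℝ) 1)
    (t : Ω → ℝ) (ht : Measurable t)
    (hpos : ∀ h : ℝ, 0 ≤ h → 0 < (P {ω | h < |t ω|}).toReal)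
    (Fdr : ℝ → ℝ)
    (hFdrDef : ∀ h : ℝ,
      Fdr h = (P (F ∩ {ω | h < |t ω|})).toReal / (P {ω | h < |t ω|}).toReal)
    (hdec : StrictAntiOn Fdr (Set.Ici (0 : ℝ)))
    (α α₀ : ℝ) (hα : α ∈ Set.Ioo (0 : ℝ) 1) (hα₀ : α₀ ∈ Set.Ioo (0 : ℝ) 1)
    (hstar : ℝ) (hstar_nonneg : 0 ≤ hstar)
    (hstar_eq : Fdr hstar = α)
    (hstar_least : ∀ h : ℝ, 0 ≤ h → Fdr h ≤ α → hstar ≤ h)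
    (h₀ : ℝ) (h₀_nonneg : 0 ≤ h₀)
    (hclassical : (P (F ∩ {ω | h₀ < |t ω|})).toReal / (P F).toReal = α₀) :
    hstar > h₀ ↔ (P F).toReal > (α / α₀) * (P {ω | h₀ < |t ω|}).toReal := by
  have hπF0 : 0 < (P F).toReal := hπF.1
  have hA0 : 0 < (P {ω | h₀ < |t ω|}).toReal := hpos h₀ h₀_nonneg
  have hnum : (P (F ∩ {ω | h₀ < |t ω|})).toReal = α₀ * (P F).toReal := by
    field_simp at hclassical
    linarith [hclassical]
  have hFdr0 : Fdr h₀ = α₀ * (P F).toReal / (P {ω | h₀ < |t ω|}).toReal := by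
    rw [hFdrDef, hnum]
  have step1 : hstar > h₀ ↔ α < Fdr h₀ := by
    constructor
    · intro hgt
      by_contra hle
      exact absurd (hstar_least h₀ h₀_nonneg (not_lt.mp hle)) (not_le.mpr hgt)
    · intro hlt
      by_contra hle
      rcases lt_or_eq_of_le (not_lt.mp hle) with h | h
      · have := hdec (Set.mem_Ici.mpr hstar_nonneg) (Set.mem_Ici.mpr h₀_nonneg) h
        rw [hstar_eq] at this
        linarith
      · rw [← h, hstar_eq] at hlt; linarith
  rw [step1, hFdr0, lt_div_iff₀ hA0, gt_iff_lt, div_mul_eq_mul_div,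
    div_lt_iff₀ hα₀.1]
  constructor <;> intro h <;> nlinarith
end

section
/- Let ε > 0 and suppose that for every t̄ > t₋good one has ν_T((t₋good, t̄]) > 0 and ν_F((t₋good, t̄]) ≤ ε·ν_T((t₋good, t̄]), and also ν_T((t₋good, ∞)) > 0 and ν_F((t₋good, ∞)) ≤ ε·ν_T((t₋good, ∞)). Then for all π, π′ ∈ [0, 2/3] and all t̄ > t₋good, |G(π′, t̄)/G(π, t̄) − 1| ≤ 2ε. (Proposition 2, Weak Identification: when false factors are ε-times less likely than true factors to land in the well-observed region, the share of false factors π_F ranging anywhere in [0, 2/3] changes the well-observed conditional distribution by at most a factor 2ε.) -/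
open MeasureTheory

/-- The mixture measure ν_π := π·ν_F + (1−π)·ν_T. -/
noncomputable def mixMeasure (νF νT : Measure ℝ) (π : ℝ) : Measure ℝ :=
  ENNReal.ofReal π • νF + ENNReal.ofReal (1 - π) • νT

/-- Conditional distribution function of well-observed t-statistics:
G(π, t̄) := ν_π((t_good, t̄]) / ν_π((t_good, ∞)). -/
noncomputable def condCDF' (νF νT : Measure ℝ) (tgood π tbar : ℝ) : ℝ :=
  ((mixMeasure νF νT π) (Set.Ioc tgood tbar)).toReal /
    ((mixMeasure νF νT π) (Set.Ioi tgood)).toReal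

lemma pi_abs_bound {p q : ℝ} (h1 : 0 ≤ p) (h2 : p ≤ 2/3) (h3 : 0 ≤ q) (h4 : q ≤ 2/3) :
    |q - p| ≤ 2 * ((1 - p) * (1 - q)) := by
  rw [abs_le]
  constructor <;> nlinarith

lemma mix_apply_toReal (νF νT : Measure ℝ) [IsFiniteMeasure νF] [IsFiniteMeasure νT]
    (π : ℝ) (hπ0 : 0 ≤ π) (hπ1 : π ≤ 1) (s : Set ℝ) :
    ((mixMeasure νF νT π) s).toReal = π * (νF s).toReal + (1 - π) * (νT s).toReal := by
  simp only [mixMeasure, Measure.coe_add, Pi.add_apply, Measure.coe_smul, Pi.smul_apply,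
    smul_eq_mul]
  rw [ENNReal.toReal_add (ENNReal.mul_ne_top ENNReal.ofReal_ne_top (measure_ne_top _ _))
      (ENNReal.mul_ne_top ENNReal.ofReal_ne_top (measure_ne_top _ _)),
    ENNReal.toReal_mul, ENNReal.toReal_mul, ENNReal.toReal_ofReal hπ0,
    ENNReal.toReal_ofReal (by linarith)]

/-- Proposition 2 (Weak Identification): when false factors are ε-times less
likely than true factors to land in the well-observed region, the share of
false factors π ranging anywhere in [0, 2/3] changes the well-observed
conditional distribution by at most a factor 2ε. -/
theorem weak_identification
    (νF νT : Measure ℝ) [IsProbabilityMeasure νF] [IsProbabilityMeasure νT]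
    (hνFsupp : νF (Set.Iio 0) = 0) (hνTsupp : νT (Set.Iio 0) = 0)
    (tgood : ℝ) (htgood : 0 < tgood)
    (ε : ℝ) (hε : 0 < ε)
    (hIoc : ∀ tbar : ℝ, tgood < tbar →
      0 < (νT (Set.Ioc tgood tbar)).toReal ∧
      (νF (Set.Ioc tgood tbar)).toReal ≤ ε * (νT (Set.Ioc tgood tbar)).toReal)
    (hIoiT : 0 < (νT (Set.Ioi tgood)).toReal)
    (hIoiF : (νF (Set.Ioi tgood)).toReal ≤ ε * (νT (Set.Ioi tgood)).toReal) :
    ∀ π π' : ℝ, π ∈ Set.Icc (0 : ℝ) (2/3) → π' ∈ Set.Icc (0 : ℝ) (2/3) →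
      ∀ tbar : ℝ, tgood < tbar →
        |condCDF' νF νT tgood π' tbar / condCDF' νF νT tgood π tbar - 1| ≤ 2 * ε := by
  intro π π' hπ hπ' tbar htbar
  obtain ⟨hπ0, hπ2⟩ := hπ
  obtain ⟨hπ'0, hπ'2⟩ := hπ'
  obtain ⟨ha, hfa⟩ := hIoc tbar htbar
  set f := (νF (Set.Ioc tgood tbar)).toReal with hf
  set a := (νT (Set.Ioc tgood tbar)).toReal with haa
  set F := (νF (Set.Ioi tgood)).toReal with hF
  set A := (νT (Set.Ioi tgood)).toReal with hA
  have hf0 : 0 ≤ f := ENNReal.toReal_nonneg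
  have hF0 : 0 ≤ F := ENNReal.toReal_nonneg
  have hcond : ∀ p : ℝ, 0 ≤ p → p ≤ 2/3 →
      condCDF' νF νT tgood p tbar = (p * f + (1 - p) * a) / (p * F + (1 - p) * A) := by
    intro p hp0 hp2
    rw [condCDF', mix_apply_toReal νF νT p hp0 (by linarith),
      mix_apply_toReal νF νT p hp0 (by linarith)]
  rw [hcond π hπ0 hπ2, hcond π' hπ'0 hπ'2]
  set N := π * f + (1 - π) * a with hN
  set D := π * F + (1 - π) * A with hD
  set N' := π' * f + (1 - π') * a with hN'
  set D' := π' * F + (1 - π') * A with hD'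
  have hπf : 0 ≤ π * f := mul_nonneg hπ0 hf0
  have hπ'f : 0 ≤ π' * f := mul_nonneg hπ'0 hf0
  have hπF : 0 ≤ π * F := mul_nonneg hπ0 hF0
  have hπ'F : 0 ≤ π' * F := mul_nonneg hπ'0 hF0
  have hπa : 0 < (1 - π) * a := mul_pos (by linarith) ha
  have hπ'a : 0 < (1 - π') * a := mul_pos (by linarith) ha
  have hπA : 0 < (1 - π) * A := mul_pos (by linarith) hIoiT
  have hπ'A : 0 < (1 - π') * A := mul_pos (by linarith) hIoiT
  have hNpos : 0 < N := by rw [hN]; linarith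
  have hDpos : 0 < D := by rw [hD]; linarith
  have hN'pos : 0 < N' := by rw [hN']; linarith
  have hD'pos : 0 < D' := by rw [hD']; linarith
  have key : N' / D' / (N / D) - 1 = (π' - π) * (f * A - a * F) / (N * D') := by
    field_simp
    ring
  rw [key, abs_div, abs_of_pos (mul_pos hNpos hD'pos), div_le_iff₀ (mul_pos hNpos hD'pos)]
  have hA0 : 0 ≤ A := hIoiT.le
  have hfA : f * A ≤ ε * a * A := mul_le_mul_of_nonneg_right hfa hA0
  have haF : a * F ≤ ε * a * A := by
    calc a * F ≤ a * (ε * A) := mul_le_mul_of_nonneg_left hIoiF ha.le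
      _ = ε * a * A := by ring
  have h1 : |f * A - a * F| ≤ ε * a * A := by
    rw [abs_le]
    constructor
    · linarith [mul_nonneg hf0 hA0]
    · linarith [mul_nonneg ha.le hF0]
  have h2 : |π' - π| ≤ 2 * ((1 - π) * (1 - π')) := pi_abs_bound hπ0 hπ2 hπ'0 hπ'2
  have h3 : (1 - π) * a * ((1 - π') * A) ≤ N * D' := by
    have e1 : (1 - π) * a ≤ N := by rw [hN]; linarith
    have e2 : (1 - π') * A ≤ D' := by rw [hD']; linarith
    exact mul_le_mul e1 e2 hπ'A.le hNpos.le
  calc |(π' - π) * (f * A - a * F)| = |π' - π| * |f * A - a * F| := abs_mul _ _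
    _ ≤ 2 * ((1 - π) * (1 - π')) * (ε * a * A) := by
        exact mul_le_mul h2 h1 (abs_nonneg _)
          (mul_nonneg (by norm_num) (mul_nonneg (by linarith) (by linarith)))
    _ = 2 * ε * ((1 - π) * a * ((1 - π') * A)) := by ring
    _ ≤ 2 * ε * (N * D') := by
        apply mul_le_mul_of_nonneg_left h3
        positivity
end

section
/- Let ε > 0, let π̄ ∈ (0,1), and suppose that for every t̄ > t₋good one has ν_T((t₋good, t̄]) > 0 and ν_F((t₋good, t̄]) ≤ ε·ν_T((t₋good, t̄]), and also ν_T((t₋good, ∞)) > 0 and ν_F((t₋good, ∞)) ≤ ε·ν_T((t₋good, ∞)). Then for all π, π′ ∈ [0, π̄] and all t̄ > t₋good, |G(π′, t̄)/G(π, t̄) − 1| ≤ (π̄/(1−π̄))·ε. (General version of Proposition 2: for any upper bound π̄ on the share of false factors, the well-observed conditional distribution changes by at most a factor (π̄/(1−π̄))·ε.) -/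
open MeasureTheory

/-!
Write `G(π) = N(π) / D(π)` with `N(π) = π a + (1 - π) b` and `D(π) = π A + (1 - π) B`, where
`a, A` are the false-factor masses and `b, B` the true-factor masses of `(t_good, t̄]` and
`(t_good, ∞)`. Then `G(π') / G(π) - 1 = (π' - π) (a B - b A) / (N(π) D(π'))`. The hypotheses give
`|a B - b A| ≤ ε b B`, while `N(π) ≥ (1 - π) b` and `D(π') ≥ (1 - π') B`, so the deviation is at
most `ε |π' - π| / ((1 - π)(1 - π')) = ε |1 / (1 - π') - 1 / (1 - π)|`. As `x ↦ 1 / (1 - x)` maps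
`[0, π̄]` into `[1, 1 / (1 - π̄)]`, this is at most `ε (1 / (1 - π̄) - 1) = ε π̄ / (1 - π̄)`.
-/

def mixture (π a b : ℝ) : ℝ := π * a + (1 - π) * b

lemma mixMeasure_apply_toReal (νF νT : Measure ℝ) [IsFiniteMeasure νF] [IsFiniteMeasure νT]
    {π : ℝ} (hπ0 : 0 ≤ π) (hπ1 : π ≤ 1) (s : Set ℝ) :
    (mixMeasure νF νT π s).toReal = mixture π (νF s).toReal (νT s).toReal := by
  simp only [mixMeasure, mixture, Measure.coe_add, Pi.add_apply, Measure.smul_apply, smul_eq_mul]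
  rw [ENNReal.toReal_add (by finiteness) (by finiteness), ENNReal.toReal_mul, ENNReal.toReal_mul,
    ENNReal.toReal_ofReal hπ0, ENNReal.toReal_ofReal (sub_nonneg.mpr hπ1)]

lemma one_sub_mul_le_mixture {π a : ℝ} (hπ : 0 ≤ π) (ha : 0 ≤ a) (b : ℝ) :
    (1 - π) * b ≤ mixture π a b :=
  le_add_of_nonneg_left (mul_nonneg hπ ha)

lemma mixture_div_mixture_div_sub_one (π π' a b A B : ℝ)
    (hN : mixture π a b ≠ 0) (hD' : mixture π' A B ≠ 0) :
    mixture π' a b / mixture π' A B / (mixture π a b / mixture π A B) - 1 =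
      (π' - π) * (a * B - b * A) / (mixture π a b * mixture π' A B) := by
  rw [div_div_div_eq, div_sub_one (mul_ne_zero hD' hN), div_eq_div_iff (mul_ne_zero hD' hN)
    (mul_ne_zero hN hD')]
  unfold mixture
  ring

lemma abs_mul_sub_mul_le {a b A B ε : ℝ} (ha : 0 ≤ a) (hb : 0 ≤ b) (hA : 0 ≤ A) (hB : 0 ≤ B)
    (haε : a ≤ ε * b) (hAε : A ≤ ε * B) :
    |a * B - b * A| ≤ ε * b * B := by
  rw [abs_le]
  constructor <;> nlinarith [mul_nonneg ha hB, mul_nonneg hb hA]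

lemma abs_sub_div_one_sub_mul_one_sub_le {x y p : ℝ} (hx : x ∈ Set.Icc 0 p)
    (hy : y ∈ Set.Icc 0 p) (hp : p < 1) :
    |x - y| / ((1 - y) * (1 - x)) ≤ p / (1 - p) := by
  obtain ⟨hx0, hxp⟩ := hx
  obtain ⟨hy0, hyp⟩ := hy
  have inv_mem (z : ℝ) (hz0 : 0 ≤ z) (hzp : z ≤ p) : 1 ≤ (1 - z)⁻¹ ∧ (1 - z)⁻¹ ≤ (1 - p)⁻¹ :=
    ⟨(one_le_inv₀ (by linarith)).mpr (by linarith), inv_anti₀ (by linarith) (by linarith)⟩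
  have hx1 : 0 < 1 - x := by linarith
  have hy1 : 0 < 1 - y := by linarith
  have hdiff : |x - y| / ((1 - y) * (1 - x)) = |(1 - x)⁻¹ - (1 - y)⁻¹| := by
    rw [mul_comm (1 - y), inv_sub_inv hx1.ne' hy1.ne', sub_sub_sub_cancel_left, abs_div,
      abs_of_pos (mul_pos hx1 hy1)]
  have hx' := inv_mem x hx0 hxp
  have hy' := inv_mem y hy0 hyp
  calc |x - y| / ((1 - y) * (1 - x)) = |(1 - x)⁻¹ - (1 - y)⁻¹| := hdiff
    _ ≤ (1 - p)⁻¹ - 1 := abs_sub_le_iff.mpr ⟨by linarith, by linarith⟩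
    _ = p / (1 - p) := by field_simp [(sub_pos.mpr hp).ne']; ring

lemma abs_mixture_div_mixture_div_sub_one_le {a b A B ε p π π' : ℝ} (ha : 0 ≤ a) (hb : 0 < b)
    (hA : 0 ≤ A) (hB : 0 < B) (haε : a ≤ ε * b) (hAε : A ≤ ε * B)
    (hπ : π ∈ Set.Icc 0 p) (hπ' : π' ∈ Set.Icc 0 p) (hp : p < 1) :
    |mixture π' a b / mixture π' A B / (mixture π a b / mixture π A B) - 1| ≤ p / (1 - p) * ε := by
  have hε : 0 ≤ ε := nonneg_of_mul_nonneg_left (ha.trans haε) hb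
  have hπ1 : 0 < 1 - π := by linarith [hπ.2]
  have hπ'1 : 0 < 1 - π' := by linarith [hπ'.2]
  have hN := one_sub_mul_le_mixture hπ.1 ha b
  have hD' := one_sub_mul_le_mixture hπ'.1 hA B
  have hN0 : 0 < mixture π a b := (mul_pos hπ1 hb).trans_le hN
  have hD'0 : 0 < mixture π' A B := (mul_pos hπ'1 hB).trans_le hD'
  rw [mixture_div_mixture_div_sub_one _ _ _ _ _ _ hN0.ne' hD'0.ne', abs_div, abs_mul,
    abs_of_pos (mul_pos hN0 hD'0)]
  calc |π' - π| * |a * B - b * A| / (mixture π a b * mixture π' A B)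
      ≤ |π' - π| * (ε * b * B) / ((1 - π) * b * ((1 - π') * B)) :=
        div_le_div₀ (by positivity)
          (mul_le_mul_of_nonneg_left (abs_mul_sub_mul_le ha hb.le hA hB.le haε hAε) (abs_nonneg _))
          (by positivity) (mul_le_mul hN hD' (by positivity) hN0.le)
    _ = |π' - π| / ((1 - π) * (1 - π')) * ε := by field_simp
    _ ≤ p / (1 - p) * ε :=
      mul_le_mul_of_nonneg_right (abs_sub_div_one_sub_mul_one_sub_le hπ' hπ hp) hε

theorem weak_identification_general_general
    (νF νT : Measure ℝ) [IsProbabilityMeasure νF] [IsProbabilityMeasure νT]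
    (tgood : ℝ)
    (ε : ℝ) (πbar : ℝ) (hπbar : πbar ∈ Set.Ioo (0 : ℝ) 1)
    (hIoc : ∀ tbar : ℝ, tgood < tbar →
      0 < (νT (Set.Ioc tgood tbar)).toReal ∧
      (νF (Set.Ioc tgood tbar)).toReal ≤ ε * (νT (Set.Ioc tgood tbar)).toReal)
    (hIoiT : 0 < (νT (Set.Ioi tgood)).toReal)
    (hIoiF : (νF (Set.Ioi tgood)).toReal ≤ ε * (νT (Set.Ioi tgood)).toReal) :
    ∀ π π' : ℝ, π ∈ Set.Icc (0 : ℝ) πbar → π' ∈ Set.Icc (0 : ℝ) πbar →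
      ∀ tbar : ℝ, tgood < tbar →
        |condCDF' νF νT tgood π' tbar / condCDF' νF νT tgood π tbar - 1| ≤ (πbar / (1 - πbar)) * ε := by
  intro π π' hπ hπ' tbar htbar
  obtain ⟨hTpos, hFle⟩ := hIoc tbar htbar
  have hπ1 : π ≤ 1 := hπ.2.trans hπbar.2.le
  have hπ'1 : π' ≤ 1 := hπ'.2.trans hπbar.2.le
  simp only [condCDF', mixMeasure_apply_toReal νF νT hπ.1 hπ1,
    mixMeasure_apply_toReal νF νT hπ'.1 hπ'1]
  exact abs_mixture_div_mixture_div_sub_one_le ENNReal.toReal_nonneg hTpos ENNReal.toReal_nonneg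
    hIoiT hFle hIoiF hπ hπ' hπbar.2

/-- Proposition 2 (Weak Identification): when false factors are ε-times less
likely than true factors to land in the well-observed region, the share of
false factors π ranging anywhere in [0, π̄] changes the well-observed
conditional distribution by at most a factor (π̄/(1−π̄))·ε. -/
theorem weak_identification_general
    (νF νT : Measure ℝ) [IsProbabilityMeasure νF] [IsProbabilityMeasure νT]
    (hνFsupp : νF (Set.Iio 0) = 0) (hνTsupp : νT (Set.Iio 0) = 0)
    (tgood : ℝ) (htgood : 0 < tgood)
    (ε : ℝ) (hε : 0 < ε) (πbar : ℝ) (hπbar : πbar ∈ Set.Ioo (0 : ℝ) 1)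
    (hIoc : ∀ tbar : ℝ, tgood < tbar →
      0 < (νT (Set.Ioc tgood tbar)).toReal ∧
      (νF (Set.Ioc tgood tbar)).toReal ≤ ε * (νT (Set.Ioc tgood tbar)).toReal)
    (hIoiT : 0 < (νT (Set.Ioi tgood)).toReal)
    (hIoiF : (νF (Set.Ioi tgood)).toReal ≤ ε * (νT (Set.Ioi tgood)).toReal) :
    ∀ π π' : ℝ, π ∈ Set.Icc (0 : ℝ) πbar → π' ∈ Set.Icc (0 : ℝ) πbar →
      ∀ tbar : ℝ, tgood < tbar →
        |condCDF' νF νT tgood π' tbar / condCDF' νF νT tgood π tbar - 1| ≤ (πbar / (1 - πbar)) * ε :=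
  weak_identification_general_general νF νT tgood ε πbar hπbar hIoc hIoiT hIoiF
end

section
/- Let ε > 0 and suppose that for every t̄ > t₋good one has ν_T((t₋good, t̄]) > 0 and ν_F((t₋good, t̄]) ≤ ε·ν_T((t₋good, t̄]), and also ν_T((t₋good, ∞)) > 0 and ν_F((t₋good, ∞)) ≤ ε·ν_T((t₋good, ∞)). Then for every π_F ∈ [0, 2/3] and every t̄ > t₋good, |G(π_F, t̄)/G_T(t̄) − 1| ≤ 2ε, where G_T(t̄) := ν_T((t₋good, t̄])/ν_T((t₋good, ∞)). (Proposition 3, Strongly Identified Parameters: the model's predictions about well-observed t-statistics are within a factor 2ε of the predictions obtained by assuming all factors are true.) -/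
open MeasureTheory

/-- Conditional distribution function of well-observed t-statistics assuming
all factors are true: G_T(t̄) := ν_T((t_good, t̄]) / ν_T((t_good, ∞)). -/
noncomputable def condCDFTrue (νT : Measure ℝ) (tgood tbar : ℝ) : ℝ :=
  (νT (Set.Ioc tgood tbar)).toReal / (νT (Set.Ioi tgood)).toReal

lemma mix_toReal (νF νT : Measure ℝ) [IsProbabilityMeasure νF] [IsProbabilityMeasure νT]
    (π : ℝ) (hπ0 : 0 ≤ π) (hπ1 : π ≤ 1) (s : Set ℝ) :
    ((mixMeasure νF νT π) s).toReal = π * (νF s).toReal + (1 - π) * (νT s).toReal := by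
  have h1 : (0:ℝ) ≤ 1 - π := by linarith
  simp only [mixMeasure, Measure.add_apply, Measure.smul_apply, smul_eq_mul]
  rw [ENNReal.toReal_add, ENNReal.toReal_mul, ENNReal.toReal_mul,
    ENNReal.toReal_ofReal hπ0, ENNReal.toReal_ofReal h1]
  · exact ENNReal.mul_ne_top ENNReal.ofReal_ne_top (measure_ne_top _ _)
  · exact ENNReal.mul_ne_top ENNReal.ofReal_ne_top (measure_ne_top _ _)

/-- Proposition 3 (Strongly Identified Parameters): the model's predictions
about well-observed t-statistics are within a factor 2ε of the predictions
obtained by assuming all factors are true. -/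
theorem strong_identification
    (νF νT : Measure ℝ) [IsProbabilityMeasure νF] [IsProbabilityMeasure νT]
    (hνFsupp : νF (Set.Iio 0) = 0) (hνTsupp : νT (Set.Iio 0) = 0)
    (tgood : ℝ) (htgood : 0 < tgood)
    (ε : ℝ) (hε : 0 < ε)
    (hIoc : ∀ tbar : ℝ, tgood < tbar →
      0 < (νT (Set.Ioc tgood tbar)).toReal ∧
      (νF (Set.Ioc tgood tbar)).toReal ≤ ε * (νT (Set.Ioc tgood tbar)).toReal)
    (hIoiT : 0 < (νT (Set.Ioi tgood)).toReal)
    (hIoiF : (νF (Set.Ioi tgood)).toReal ≤ ε * (νT (Set.Ioi tgood)).toReal) :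
    ∀ πF : ℝ, πF ∈ Set.Icc (0 : ℝ) (2/3) →
      ∀ tbar : ℝ, tgood < tbar →
        |condCDF' νF νT tgood πF tbar / condCDFTrue νT tgood tbar - 1| ≤ 2 * ε := by
  intro π hπ tbar htbar
  obtain ⟨hπ0, hπ23⟩ := hπ
  have hπ1 : π ≤ 1 := by linarith
  obtain ⟨hb, hab⟩ := hIoc tbar htbar
  set a := (νF (Set.Ioc tgood tbar)).toReal with ha_def
  set b := (νT (Set.Ioc tgood tbar)).toReal with hb_def
  set c := (νF (Set.Ioi tgood)).toReal with hc_def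
  set d := (νT (Set.Ioi tgood)).toReal with hd_def
  have ha0 : 0 ≤ a := ENNReal.toReal_nonneg
  have hc0 : 0 ≤ c := ENNReal.toReal_nonneg
  have hG : condCDF' νF νT tgood π tbar = (π * a + (1 - π) * b) / (π * c + (1 - π) * d) := by
    rw [condCDF', mix_toReal νF νT π hπ0 hπ1, mix_toReal νF νT π hπ0 hπ1]
  have hGT : condCDFTrue νT tgood tbar = b / d := rfl
  rw [hG, hGT]
  have hD : 0 < π * c + (1 - π) * d := by nlinarith
  have key : (π * a + (1 - π) * b) / (π * c + (1 - π) * d) / (b / d)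
      = ((π * a + (1 - π) * b) * d) / ((π * c + (1 - π) * d) * b) := by
    field_simp
  rw [key, abs_le]
  have hDb : 0 < (π * c + (1 - π) * d) * b := by positivity
  have h1 : π * (c * b) ≤ π * (ε * d * b) :=
    mul_le_mul_of_nonneg_left (by nlinarith) hπ0
  have h2 : 0 ≤ ε * (d * b) * (2 * (1 - π) - π) := by
    have : 0 ≤ 2 * (1 - π) - π := by linarith
    positivity
  have h3 : 0 ≤ π * (a * d) := mul_nonneg hπ0 (mul_nonneg ha0 hIoiT.le)
  have h4 : 0 ≤ 2 * ε * (π * (c * b)) := by positivity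
  have h5 : π * (a * d) ≤ π * (ε * b * d) :=
    mul_le_mul_of_nonneg_left (by nlinarith) hπ0
  have h6 : 0 ≤ π * (c * b) := by positivity
  constructor
  · rw [neg_le, neg_sub, sub_le_iff_le_add, ← sub_le_iff_le_add', le_div_iff₀ hDb]
    nlinarith [h1, h2, h3, h4]
  · rw [sub_le_iff_le_add, div_le_iff₀ hDb]
    nlinarith [h5, h2, h4, h6]
end

section
/- Let N ≥ 2 and α ∈ (0,1), let h₀ ≥ 0 satisfy 2(1 − Φ(h₀)) = α, and suppose P̂(h₀) > 0. Suppose F̂_BY is strictly decreasing on {h ≥ 0 : P̂(h) > 0}. Then every h ≥ 0 with P̂(h) > 0 and F̂_BY(h) ≤ α satisfies h > h₀; in particular, the Benjamini–Yekutieli (Theorem 1.3) hurdle h_BY(α) := min{h ≥ 0 : P̂(h) > 0 and F̂_BY(h) ≤ α}, when it exists, is strictly greater than the classical hurdle h₀. (Corollary 1: BY's Theorem 1.3 always implies that t-statistic hurdles need to be raised.) -/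
open MeasureTheory ProbabilityTheory

/-- Standard normal cumulative distribution function Φ. -/
noncomputable def stdNormCDF (x : ℝ) : ℝ := ((gaussianReal 0 1) (Set.Iic x)).toReal

/-- Empirical exceedance share P̂(h) := N⁻¹·Σ_{i=1}^N 1{|t_i| > h}. -/
noncomputable def empShare {N : ℕ} (t : Fin N → ℝ) (h : ℝ) : ℝ :=
  ((Finset.univ.filter fun i : Fin N => h < |t i|).card : ℝ) / N

/-- Harmonic sum H_N := Σ_{i=1}^N 1/i. -/
noncomputable def harmonicSum (N : ℕ) : ℝ := ∑ i ∈ Finset.Icc 1 N, (1 : ℝ) / i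

/-- Benjamini–Yekutieli (Theorem 1.3) FDR estimator
F̂_BY(h) := 2(1 − Φ(h))·H_N / P̂(h). -/
noncomputable def fdrBY {N : ℕ} (t : Fin N → ℝ) (h : ℝ) : ℝ :=
  2 * (1 - stdNormCDF h) * harmonicSum N / empShare t h

/-- Corollary 1: BY's Theorem 1.3 always implies that t-statistic hurdles need
to be raised: every hurdle h with P̂(h) > 0 and F̂_BY(h) ≤ α strictly exceeds
the classical hurdle h₀. -/
theorem by_hurdle_raised
    {N : ℕ} (hN : 2 ≤ N) (t : Fin N → ℝ)
    (α : ℝ) (hα : α ∈ Set.Ioo (0 : ℝ) 1)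
    (h₀ : ℝ) (h₀_nonneg : 0 ≤ h₀)
    (hclassical : 2 * (1 - stdNormCDF h₀) = α)
    (hP₀ : 0 < empShare t h₀)
    (hdec : StrictAntiOn (fdrBY t) {h : ℝ | 0 ≤ h ∧ 0 < empShare t h}) :
    ∀ h : ℝ, 0 ≤ h → 0 < empShare t h → fdrBY t h ≤ α → h₀ < h := by
  intro h hh hP hF
  -- harmonic sum ≥ 3/2
  have hH : (3 : ℝ) / 2 ≤ harmonicSum N := by
    have hsub : Finset.Icc (1:ℕ) 2 ⊆ Finset.Icc 1 N := Finset.Icc_subset_Icc_right hN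
    have h1 : ∑ i ∈ Finset.Icc (1:ℕ) 2, (1 : ℝ) / i ≤ harmonicSum N := by
      apply Finset.sum_le_sum_of_subset_of_nonneg hsub
      intro i _ _
      positivity
    have h2 : ∑ i ∈ Finset.Icc (1:ℕ) 2, (1 : ℝ) / i = 3/2 := by rw [show Finset.Icc (1:ℕ) 2 = {1, 2} from rfl]; norm_num
    linarith
  -- empShare ≤ 1
  have hP₀le : empShare t h₀ ≤ 1 := by
    unfold empShare
    have hNpos : (0 : ℝ) < N := by positivity
    rw [div_le_one hNpos]
    have := (Finset.card_filter_le Finset.univ fun i : Fin N => h₀ < |t i|).trans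
      (le_of_eq (Finset.card_univ.trans (Fintype.card_fin N)))
    exact_mod_cast this
  have hα0 := hα.1
  -- fdrBY t h₀ > α
  have key : α < fdrBY t h₀ := by
    unfold fdrBY
    rw [hclassical]
    have h1 : α < α * harmonicSum N := by
      nlinarith
    have h2 : α * harmonicSum N ≤ α * harmonicSum N / empShare t h₀ := by
      rw [le_div_iff₀ hP₀]
      nlinarith
    linarith
  by_contra hle
  push_neg at hle
  rcases lt_or_eq_of_le hle with hlt | heq
  · have := hdec ⟨hh, hP⟩ ⟨h₀_nonneg, hP₀⟩ hlt
    linarith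
  · subst heq; linarith
end

section
/- Fix h ≥ 0 and suppose 𝒫(|t₁| > h) > 0. Assume the weak laws of large numbers: N⁻¹·Σ_{i=1}^N 1{|t_i| > h} converges in probability to 𝒫(|t₁| > h), and N⁻¹·Σ_{i=1}^N 1{F_i ∩ {|t_i| > h}} converges in probability to 𝒫(F₁ ∩ {|t₁| > h}). Then the Benjamini–Hochberg false discovery proportion R_N := [Σ_{i=1}^N 1{F_i ∩ {|t_i| > h}}] / [Σ_{i=1}^N 1{|t_i| > h}] (set to 0 when the denominator is 0) converges in probability to the Bayesian false discovery rate 𝒫(F₁ | |t₁| > h) := 𝒫(F₁ ∩ {|t₁| > h})/𝒫(|t₁| > h). (Equivalence of the Benjamini–Hochberg FDR and the Bayesian FDR under weak dependence.) -/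
open MeasureTheory ProbabilityTheory Filter
open scoped Classical

/-!
Both counts, divided by `N`, converge in probability to constants by the weak laws, and the
false discovery proportion is the quotient of these two averages (the common factor `N` cancels,
and Lean's `x / 0 = 0` matches the convention `R_N = 0` when nothing is rejected). Since
`(x, y) ↦ y / x` is continuous at `(𝒫(|t₁| > h), 𝒫(F₁ ∩ {|t₁| > h}))`, whose first coordinate is
positive, the continuous mapping theorem for convergence in probability to a constant gives the
limit.
-/

namespace MeasureTheory.TendstoInMeasure

variable {α ι E F G : Type*} [MeasurableSpace α] {μ : Measure α} {l : Filter ι}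
  [PseudoEMetricSpace E] [PseudoEMetricSpace F] [PseudoEMetricSpace G]

theorem prodMk {f : ι → α → E} {g : ι → α → F} {u : α → E} {v : α → F}
    (hf : TendstoInMeasure μ f l u) (hg : TendstoInMeasure μ g l v) :
    TendstoInMeasure μ (fun i x => (f i x, g i x)) l (fun x => (u x, v x)) := by
  intro ε hε
  have hsplit : ∀ i, {x | ε ≤ edist (f i x, g i x) (u x, v x)} =
      {x | ε ≤ edist (f i x) (u x)} ∪ {x | ε ≤ edist (g i x) (v x)} := fun i => by
    ext x
    simp [Prod.edist_eq]
  refine tendsto_of_tendsto_of_tendsto_of_le_of_le tendsto_const_nhds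
    (by simpa using (hf ε hε).add (hg ε hε)) (fun _ => zero_le) fun i => ?_
  rw [hsplit]
  exact measure_union_le _ _

theorem comp_continuousAt {f : ι → α → E} {c : E} {φ : E → G}
    (hf : TendstoInMeasure μ f l fun _ => c) (hφ : ContinuousAt φ c) :
    TendstoInMeasure μ (fun i x => φ (f i x)) l fun _ => φ c := by
  intro ε hε
  obtain ⟨δ, hδ, hδε⟩ := EMetric.continuousAt_iff.mp hφ ε hε
  refine tendsto_of_tendsto_of_tendsto_of_le_of_le tendsto_const_nhds (hf δ hδ)
    (fun _ => zero_le) fun i => measure_mono fun x hx => ?_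
  by_contra hlt
  exact (hδε (not_le.mp hlt)).not_ge hx

end MeasureTheory.TendstoInMeasure

theorem ite_eq_zero_div_eq_div_div_div {K : Type*} [Field K] [DecidableEq K] (S V c : K)
    (hS : c = 0 → S = 0) : (if S = 0 then 0 else V / S) = (V / c) / (S / c) := by
  rcases eq_or_ne c 0 with rfl | hc
  · simp [hS rfl]
  · rw [div_div_div_cancel_right₀ hc]
    split_ifs with h0 <;> simp [h0]

theorem bh_fdp_tendsto_bayes_fdr_general
    {Ω : Type*} [MeasurableSpace Ω] (P : Measure Ω) [IsProbabilityMeasure P]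
    (F : ℕ → Set Ω)
    (t : ℕ → Ω → ℝ)
    (h : ℝ)
    (hpos : 0 < P {ω | h < |t 0 ω|})
    (hwlln1 : TendstoInMeasure P
      (fun N ω => (∑ i ∈ Finset.range N, if h < |t i ω| then (1 : ℝ) else 0) / N)
      atTop (fun _ => (P {ω | h < |t 0 ω|}).toReal))
    (hwlln2 : TendstoInMeasure P
      (fun N ω =>
        (∑ i ∈ Finset.range N, if ω ∈ F i ∧ h < |t i ω| then (1 : ℝ) else 0) / N)
      atTop (fun _ => (P (F 0 ∩ {ω | h < |t 0 ω|})).toReal)) :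
    TendstoInMeasure P
      (fun N ω =>
        if (∑ i ∈ Finset.range N, if h < |t i ω| then (1 : ℝ) else 0) = 0 then 0
        else (∑ i ∈ Finset.range N, if ω ∈ F i ∧ h < |t i ω| then (1 : ℝ) else 0) /
          (∑ i ∈ Finset.range N, if h < |t i ω| then (1 : ℝ) else 0))
      atTop
      (fun _ => (P (F 0 ∩ {ω | h < |t 0 ω|})).toReal /
        (P {ω | h < |t 0 ω|}).toReal) := by
  have hrate : (P {ω | h < |t 0 ω|}).toReal ≠ 0 :=
    (ENNReal.toReal_pos hpos.ne' (measure_ne_top P _)).ne'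
  have hquot := (hwlln1.prodMk hwlln2).comp_continuousAt
    (φ := fun p : ℝ × ℝ => p.2 / p.1) (continuousAt_snd.div continuousAt_fst hrate)
  refine hquot.congr_left fun N => Eventually.of_forall fun ω => ?_
  exact (ite_eq_zero_div_eq_div_div_div _ _ _ fun hN => by simp [Nat.cast_eq_zero.mp hN]).symm

/-- Equivalence of the Benjamini–Hochberg false discovery proportion and the
Bayesian FDR under weak dependence: given the weak laws of large numbers, the
BH false discovery proportion converges in probability to the Bayesian FDR. -/
theorem bh_fdp_tendsto_bayes_fdr
    {Ω : Type*} [MeasurableSpace Ω] (P : Measure Ω) [IsProbabilityMeasure P]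
    (F : ℕ → Set Ω) (hFmeas : ∀ i, MeasurableSet (F i))
    (t : ℕ → Ω → ℝ) (ht : ∀ i, Measurable (t i))
    (hident : ∀ i, IdentDistrib
      (fun ω => ((F i).indicator (fun _ => (1 : ℝ)) ω, t i ω))
      (fun ω => ((F 0).indicator (fun _ => (1 : ℝ)) ω, t 0 ω)) P P)
    (h : ℝ) (hh : 0 ≤ h)
    (hpos : 0 < P {ω | h < |t 0 ω|})
    (hwlln1 : TendstoInMeasure P
      (fun N ω => (∑ i ∈ Finset.range N, if h < |t i ω| then (1 : ℝ) else 0) / N)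
      atTop (fun _ => (P {ω | h < |t 0 ω|}).toReal))
    (hwlln2 : TendstoInMeasure P
      (fun N ω =>
        (∑ i ∈ Finset.range N, if ω ∈ F i ∧ h < |t i ω| then (1 : ℝ) else 0) / N)
      atTop (fun _ => (P (F 0 ∩ {ω | h < |t 0 ω|})).toReal)) :
    TendstoInMeasure P
      (fun N ω =>
        if (∑ i ∈ Finset.range N, if h < |t i ω| then (1 : ℝ) else 0) = 0 then 0
        else (∑ i ∈ Finset.range N, if ω ∈ F i ∧ h < |t i ω| then (1 : ℝ) else 0) /
          (∑ i ∈ Finset.range N, if h < |t i ω| then (1 : ℝ) else 0))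
      atTop
      (fun _ => (P (F 0 ∩ {ω | h < |t 0 ω|})).toReal /
        (P {ω | h < |t 0 ω|}).toReal) :=
  bh_fdp_tendsto_bayes_fdr_general P F t h hpos hwlln1 hwlln2
end
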